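/- Let Σ be a ranked alphabet. If R is a regular string language over the alphabet Σ_0, then the tree language {t ∈ T_Σ | yield(t) ∈ R} is recognizable. -/

import Mathlib

inductive RTree (σ : ℕ → Type) : Type
  | node {k : ℕ} (a : σ k) (ts : Fin k → RTree σ) : RTree σ

/-- The contribution of a single symbol to the yield: a rank-0 symbol `a`
contributes `f a`, symbols of positive rank contribute nothing. -/
def leafPart {σ : ℕ → Type} {Γ : Type} (f : σ 0 → List Γ) : ∀ k, σ k → List Γ
  | 0, a => f a
  | _ + 1, _ => []

/-- The yield of a tree, where each rank-0 symbol `a` contributes the string `f a`: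
`yield(a) = f a` and `yield(a[t₁⋯t_k]) = yield(t₁)⋯yield(t_k)`. -/
def yieldWith {σ : ℕ → Type} {Γ : Type} (f : σ 0 → List Γ) : RTree σ → List Γ
  | @RTree.node _ k a ts => leafPart f k a ++ (List.ofFn fun i => yieldWith f (ts i)).flatten

/-- Deterministic bottom-up finite tree automaton. -/
structure DBUA (σ : ℕ → Type) (Q : Type) where
  δ : ∀ k, σ k → (Fin k → Q) → Q
  F : Set Q

def DBUA.run {σ : ℕ → Type} {Q : Type} (M : DBUA σ Q) : RTree σ → Q
  | .node a ts => M.δ _ a fun i => M.run (ts i)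

def DBUA.lang {σ : ℕ → Type} {Q : Type} (M : DBUA σ Q) : Set (RTree σ) :=
  {t | M.run t ∈ M.F}

/-- A tree language is recognizable if it is recognized by some deterministic
bottom-up finite tree automaton with finitely many states. -/
def Recognizable {σ : ℕ → Type} (L : Set (RTree σ)) : Prop :=
  ∃ (Q : Type) (_ : Fintype Q) (M : DBUA σ Q), L = M.lang

/-- A string language is regular if it is accepted by a deterministic finite
automaton with finitely many states. -/
def RegularLang {α : Type} (R : Language α) : Prop :=
  ∃ (Q : Type) (_ : Fintype Q) (M : DFA α Q), M.accepts = R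

/-! Evaluate a tree `t` to the state transformer `q ↦ δ*(q, yield t)` of a DFA for `R`.
There are finitely many transformers, and since the yield of a node is the concatenation of
its children's yields, the transformer of a node is the composite of those of its children
(after the node's own contribution to the yield). -/

section

variable {σ : ℕ → Type} {α Q : Type} (M : DFA α Q)

theorem DFA.evalFrom_flatten (q : Q) (L : List (List α)) :
    M.evalFrom q L.flatten = (L.map fun w q => M.evalFrom q w).foldl (fun q g => g q) q := by
  induction L generalizing q with
  | nil => rfl
  | cons w L ih => rw [List.flatten_cons, DFA.evalFrom_of_append, ih]; rfl

def DFA.yieldAutomaton (f : σ 0 → List α) : DBUA σ (Q → Q) where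
  δ k a g q := (List.ofFn g).foldl (fun q g => g q) (M.evalFrom q (leafPart f k a))
  F := {g | g M.start ∈ M.accept}

theorem DFA.run_yieldAutomaton (f : σ 0 → List α) (t : RTree σ) :
    (M.yieldAutomaton f).run t = fun q => M.evalFrom q (yieldWith f t) := by
  induction t with
  | node a ts ih =>
    funext q
    rw [DBUA.run, yieldWith, DFA.evalFrom_of_append, DFA.evalFrom_flatten, List.map_ofFn]
    simp only [ih]
    rfl

theorem DFA.yieldAutomaton_lang (f : σ 0 → List α) :
    (M.yieldAutomaton f).lang = {t | yieldWith f t ∈ M.accepts} := by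
  ext t
  simp only [DBUA.lang, DFA.run_yieldAutomaton]
  rfl

theorem RegularLang.recognizable_preimage_yieldWith {R : Language α} (hR : RegularLang R)
    (f : σ 0 → List α) : Recognizable {t : RTree σ | yieldWith f t ∈ R} := by
  classical
  obtain ⟨Q, _, M, rfl⟩ := hR
  exact ⟨Q → Q, inferInstance, M.yieldAutomaton f, (M.yieldAutomaton_lang f).symm⟩

end

/-- Theorem 3.30: if `R` is a regular string language over `Σ₀`, then the tree
language `{t ∈ T_Σ | yield(t) ∈ R}` is recognizable (the yield drops the
distinguished symbol `e`). -/
theorem yield_in_regular_recognizable {σ : ℕ → Type} [DecidableEq (σ 0)] (e : σ 0)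
    (R : Language (σ 0)) (hR : RegularLang R) :
    Recognizable {t : RTree σ |
      yieldWith (fun a => if a = e then [] else [a]) t ∈ R} :=
  hR.recognizable_preimage_yieldWith _
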